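/- If Q ∈ H¹(ℝᵈ)\{0} satisfies K(Q) < 0, and S_ω(Q) < m_ω, then K(Q) < S_ω(Q) - m_ω < 0; more precisely S_ω(Q) > m_ω + K(Q). (Uniform negativity of K below the ground state level.) -/

import Mathlib

open MeasureTheory Filter Asymptotics Real Topology

noncomputable section

abbrev Ed (d : ℕ) : Type := EuclideanSpace ℝ (Fin d)

/-- squared L² norm -/
def l2sq (d : ℕ) (u : Ed d → ℝ) : ℝ := ∫ x : Ed d, (u x) ^ 2

/-- squared L² norm of the gradient -/
def gradsq (d : ℕ) (u : Ed d → ℝ) : ℝ := ∫ x : Ed d, ‖fderiv ℝ u x‖ ^ 2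

/-- ∫ |u|^q -/
def lpInt (d : ℕ) (q : ℝ) (u : Ed d → ℝ) : ℝ := ∫ x : Ed d, |u x| ^ q

/-- critical Sobolev exponent 2* = 2d/(d-2) -/
def twoStar (d : ℕ) : ℝ := 2 * (d : ℝ) / ((d : ℝ) - 2)

/-- membership in H¹(ℝᵈ) -/
def H1 (d : ℕ) (u : Ed d → ℝ) : Prop :=
  MemLp u 2 (volume : Measure (Ed d)) ∧ Differentiable ℝ u ∧
    MemLp (fun x => ‖fderiv ℝ u x‖) 2 (volume : Measure (Ed d))

/-- L²-scaling operator (T_λ u)(x) = λ^{d/2} u(λ x) -/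
def Tscal (d : ℕ) (lam : ℝ) (u : Ed d → ℝ) : Ed d → ℝ :=
  fun x => lam ^ ((d : ℝ) / 2) * u (lam • x)

/-- the action S_ω -/
def Sfun (d : ℕ) (ω μ p : ℝ) (u : Ed d → ℝ) : ℝ :=
  ω * l2sq d u + gradsq d u - (2 * μ / (p + 1)) * lpInt d (p + 1) u
    - (((d : ℝ) - 2) / (d : ℝ)) * lpInt d (twoStar d) u

/-- the functional K -/
def Kfun (d : ℕ) (μ p : ℝ) (u : Ed d → ℝ) : ℝ :=
  2 * gradsq d u - μ * ((d : ℝ) * (p - 1) / (p + 1)) * lpInt d (p + 1) u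
    - 2 * lpInt d (twoStar d) u

/-- the functional I_ω -/
def Ifun (d : ℕ) (ω p : ℝ) (u : Ed d → ℝ) : ℝ :=
  ω * l2sq d u + (((d : ℝ) * (p - 1) - 4) / ((d : ℝ) * (p - 1))) * gradsq d u
    + ((4 - ((d : ℝ) - 2) * (p - 1)) / ((d : ℝ) * (p - 1))) * lpInt d (twoStar d) u

/-- admissible class: nonzero H¹ functions (lying also in L^{p+1} and L^{2*}) -/
def adm (d : ℕ) (p : ℝ) (u : Ed d → ℝ) : Prop :=
  H1 d u ∧ ¬ (u =ᵐ[(volume : Measure (Ed d))] 0) ∧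
    MemLp u (ENNReal.ofReal (p + 1)) (volume : Measure (Ed d)) ∧
    MemLp u (ENNReal.ofReal (twoStar d)) (volume : Measure (Ed d))

/-- the variational value m_ω -/
def mOmega (d : ℕ) (ω μ p : ℝ) : ℝ :=
  sInf {y | ∃ u : Ed d → ℝ, adm d p u ∧ Kfun d μ p u = 0 ∧ y = Sfun d ω μ p u}

/-- the variational value m̃_ω -/
def mTilde (d : ℕ) (ω μ p : ℝ) : ℝ :=
  sInf {y | ∃ u : Ed d → ℝ, adm d p u ∧ Kfun d μ p u ≤ 0 ∧ y = Ifun d ω p u}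

/-- best Sobolev constant σ -/
def sobolev (d : ℕ) : ℝ :=
  sInf {y | ∃ u : Ed d → ℝ, Differentiable ℝ u ∧ lpInt d (twoStar d) u = 1 ∧ y = gradsq d u}

/-- Laplacian -/
def lap (d : ℕ) (u : Ed d → ℝ) (x : Ed d) : ℝ :=
  ∑ i : Fin d, fderiv ℝ (fun y => fderiv ℝ u y (EuclideanSpace.single i 1)) x
    (EuclideanSpace.single i 1)

/-!
Along the `L²`-invariant scaling `λ ↦ T_λ Q`, the action `S_ω(T_λ Q)` has derivative
`λ⁻¹ K(T_λ Q) = λ k(λ)`, where `k(λ) = K(T_λ Q) / λ²` is nonincreasing, `k(0) = 2 ‖∇Q‖² > 0` and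
`k(1) = K(Q) < 0`. So `k` vanishes at some `λ₀ ∈ (0, 1)`, whence `m_ω ≤ S_ω(T_λ₀ Q)`; and on
`[λ₀, 1]` the derivative `λ k(λ)` is at least `k(1) = K(Q)`, so
`S_ω(Q) ≥ S_ω(T_λ₀ Q) + (1 - λ₀) K(Q) > m_ω + K(Q)`.

That `‖∇Q‖² > 0` holds because a differentiable function whose derivative vanishes almost everywhere
is constant on almost every line, hence constant, and a nonzero constant is not in `L²`.
-/

open Set

theorem l2sq_nonneg (d : ℕ) (u : Ed d → ℝ) : 0 ≤ l2sq d u :=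
  integral_nonneg fun _ => sq_nonneg _

theorem gradsq_nonneg (d : ℕ) (u : Ed d → ℝ) : 0 ≤ gradsq d u :=
  integral_nonneg fun _ => sq_nonneg _

theorem lpInt_nonneg (d : ℕ) (q : ℝ) (u : Ed d → ℝ) : 0 ≤ lpInt d q u :=
  integral_nonneg fun _ => Real.rpow_nonneg (abs_nonneg _) _

theorem rpow_eq_sq_mul_rpow_sub_two {l : ℝ} (hl : 0 < l) (a : ℝ) :
    l ^ a = l ^ 2 * l ^ (a - 2) := by
  rw [← Real.rpow_natCast, ← Real.rpow_add hl]
  norm_num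

theorem two_lt_twoStar {d : ℕ} (hd : 2 < d) : 2 < twoStar d := by
  have hd' : (2 : ℝ) < d := by exact_mod_cast hd
  rw [twoStar, lt_div_iff₀ (by linarith)]
  linarith

theorem mul_twoStar_div_two_sub {d : ℕ} (hd : 2 < d) :
    (d : ℝ) * twoStar d / 2 - d = twoStar d := by
  have : (d : ℝ) - 2 ≠ 0 := by
    have : (2 : ℝ) < d := by exact_mod_cast hd
    linarith
  rw [twoStar]
  field_simp
  ring

section ConstOfFDeriv

variable {E F : Type*} [NormedAddCommGroup E] [NormedSpace ℝ E]
  [NormedAddCommGroup F] [NormedSpace ℝ F] [CompleteSpace F] {u : E → F}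

theorem apply_add_smul_eq_of_fderiv_ae_eq_zero (hu : Differentiable ℝ u) {x v : E}
    (h : ∀ᵐ t : ℝ, fderiv ℝ u (x + t • v) = 0) (t : ℝ) : u (x + t • v) = u x := by
  have hderiv : ∀ s : ℝ,
      HasDerivAt (fun r : ℝ => u (x + r • v)) (fderiv ℝ u (x + s • v) v) s :=
    fun s => (hu _).hasFDerivAt.comp_hasDerivAt s
      (by simpa using ((hasDerivAt_id s).smul_const v).const_add x)
  have hzero : ∀ᵐ s : ℝ, fderiv ℝ u (x + s • v) v = 0 := by
    filter_upwards [h] with s hs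
    simp [hs]
  have hint : IntervalIntegrable (fun s : ℝ => fderiv ℝ u (x + s • v) v) volume 0 t :=
    (intervalIntegrable_const (c := (0 : F))).congr_ae
      (ae_restrict_of_ae (hzero.mono fun s hs => hs.symm))
  have hftc := intervalIntegral.integral_eq_sub_of_hasDerivAt (fun s _ => hderiv s) hint
  rw [intervalIntegral.integral_zero_ae (hzero.mono fun s hs _ => hs)] at hftc
  simpa [sub_eq_zero, eq_comm] using hftc

theorem eq_of_fderiv_ae_eq_zero [MeasurableSpace E] [BorelSpace E] [FiniteDimensional ℝ E]
    {μ : Measure E} [μ.IsAddHaarMeasure] (hu : Differentiable ℝ u)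
    (h : ∀ᵐ x ∂μ, fderiv ℝ u x = 0) (x y : E) : u x = u y := by
  suffices hline : ∀ v x : E, ∀ t : ℝ, u (x + t • v) = u x by
    simpa using (hline (y - x) x 1).symm
  intro v
  have hmeas : MeasurableSet {z : E × ℝ | fderiv ℝ u (z.1 + z.2 • v) = 0} :=
    (measurable_fderiv ℝ u).comp (by fun_prop) (measurableSet_singleton 0)
  have hae : ∀ᵐ x ∂μ, ∀ᵐ t : ℝ, fderiv ℝ u (x + t • v) = 0 :=
    (Measure.ae_ae_comm hmeas).2 <| ae_of_all _ fun t =>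
      (measurePreserving_add_right μ (t • v)).quasiMeasurePreserving.ae h
  have hdense : Dense {x | ∀ t : ℝ, u (x + t • v) = u x} :=
    Measure.dense_of_ae (μ := μ) <|
      hae.mono fun x hx => apply_add_smul_eq_of_fderiv_ae_eq_zero hu hx
  intro x t
  refine congrFun (Continuous.ext_on hdense ?_ hu.continuous fun y hy => hy t) x
  exact hu.continuous.comp (continuous_add_const _)

end ConstOfFDeriv

theorem MeasureTheory.MemLp.comp_smul {E F : Type*} [NormedAddCommGroup E] [NormedSpace ℝ E]
    [MeasurableSpace E] [BorelSpace E] [FiniteDimensional ℝ E] [NormedAddCommGroup F]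
    {μ : Measure E} [μ.IsAddHaarMeasure] {f : E → F} {q : ENNReal} (hf : MemLp f q μ)
    {r : ℝ} (hr : r ≠ 0) : MemLp (fun x => f (r • x)) q μ :=
  (hf.smul_measure ENNReal.ofReal_ne_top).comp_measurePreserving
    ⟨measurable_const_smul r, Measure.map_addHaar_smul μ hr⟩

theorem add_one_sub_mul_le_of_hasDerivAt {f g : ℝ → ℝ} {a : ℝ} (ha : a ≤ 1)
    (hf : ∀ x ∈ Icc a 1, HasDerivAt f (x * g x) x) (hg : AntitoneOn g (Icc a 1))
    (hga : g a ≤ 0) : f a + (1 - a) * g 1 ≤ f 1 := by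
  have hmem : ∀ x ∈ Ioo a 1, x ∈ Icc a 1 := fun x hx => Ioo_subset_Icc_self hx
  have hslope : ∀ x ∈ interior (Icc a 1), g 1 ≤ deriv f x := by
    rw [interior_Icc]
    intro x hx
    have h1 : g 1 ≤ g x := hg (hmem x hx) (right_mem_Icc.2 ha) hx.2.le
    have h0 : g x ≤ 0 := (hg (left_mem_Icc.2 ha) (hmem x hx) hx.1.le).trans hga
    rw [(hf x (hmem x hx)).deriv]
    nlinarith [hx.2]
  have := (convex_Icc a 1).mul_sub_le_image_sub_of_le_deriv
    (fun x hx => (hf x hx).continuousAt.continuousWithinAt)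
    (fun x hx => (hf x (interior_subset hx)).differentiableAt.differentiableWithinAt)
    hslope a (left_mem_Icc.2 ha) 1 (right_mem_Icc.2 ha) ha
  linarith

section Scaling

variable {d : ℕ} {u : Ed d → ℝ} {lam : ℝ}

theorem integral_comp_smul_Ed (hlam : 0 < lam) (g : Ed d → ℝ) :
    ∫ x : Ed d, g (lam • x) = lam ^ (-(d : ℝ)) * ∫ x : Ed d, g x := by
  rw [Measure.integral_comp_smul, smul_eq_mul, finrank_euclideanSpace_fin, abs_inv, abs_pow,
    abs_of_pos hlam, Real.rpow_neg hlam.le, Real.rpow_natCast]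

theorem Tscal_one : Tscal d 1 u = u := by
  ext x
  simp [Tscal]

theorem hasFDerivAt_Tscal (hu : Differentiable ℝ u) (lam : ℝ) (x : Ed d) :
    HasFDerivAt (Tscal d lam u) ((lam ^ ((d : ℝ) / 2) * lam) • fderiv ℝ u (lam • x)) x := by
  have hcomp := ((hu (lam • x)).hasFDerivAt.comp x
    ((hasFDerivAt_id x).const_smul lam)).const_mul (lam ^ ((d : ℝ) / 2))
  have hlin :
      lam ^ ((d : ℝ) / 2) • (fderiv ℝ u (lam • x)).comp (lam • ContinuousLinearMap.id ℝ _)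
      = (lam ^ ((d : ℝ) / 2) * lam) • fderiv ℝ u (lam • x) := by
    ext v
    simp only [smul_apply, ContinuousLinearMap.comp_apply,
      ContinuousLinearMap.id_apply, map_smul, smul_eq_mul]
    ring
  rw [← hlin]
  exact hcomp

theorem norm_fderiv_Tscal (hu : Differentiable ℝ u) (hlam : 0 < lam) (x : Ed d) :
    ‖fderiv ℝ (Tscal d lam u) x‖
      = lam ^ ((d : ℝ) / 2) * lam * ‖fderiv ℝ u (lam • x)‖ := by
  rw [(hasFDerivAt_Tscal hu lam x).fderiv, norm_smul, Real.norm_eq_abs,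
    abs_of_pos (by positivity)]

theorem l2sq_Tscal (hlam : 0 < lam) : l2sq d (Tscal d lam u) = l2sq d u := by
  have hsq : ∀ x : Ed d, (Tscal d lam u x) ^ 2 = lam ^ (d : ℝ) * u (lam • x) ^ 2 := by
    intro x
    rw [Tscal, mul_pow, ← Real.rpow_natCast, ← Real.rpow_mul hlam.le]
    norm_num
  simp only [l2sq, hsq]
  rw [integral_const_mul, integral_comp_smul_Ed hlam (fun x => u x ^ 2), ← mul_assoc,
    ← Real.rpow_add hlam]
  simp

theorem gradsq_Tscal (hu : Differentiable ℝ u) (hlam : 0 < lam) :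
    gradsq d (Tscal d lam u) = lam ^ 2 * gradsq d u := by
  have hsq : ∀ x : Ed d, ‖fderiv ℝ (Tscal d lam u) x‖ ^ 2
      = lam ^ (d : ℝ) * lam ^ 2 * ‖fderiv ℝ u (lam • x)‖ ^ 2 := by
    intro x
    rw [norm_fderiv_Tscal hu hlam, mul_pow, mul_pow, ← Real.rpow_natCast (lam ^ _),
      ← Real.rpow_mul hlam.le]
    norm_num
  simp only [gradsq, hsq]
  rw [integral_const_mul, integral_comp_smul_Ed hlam (fun x => ‖fderiv ℝ u x‖ ^ 2),
    mul_comm (lam ^ (d : ℝ)), mul_assoc, ← mul_assoc (lam ^ (d : ℝ)), ← Real.rpow_add hlam]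
  simp

theorem lpInt_Tscal {q : ℝ} (hlam : 0 < lam) :
    lpInt d q (Tscal d lam u) = lam ^ ((d : ℝ) * q / 2 - d) * lpInt d q u := by
  have hpow : ∀ x : Ed d,
      |Tscal d lam u x| ^ q = lam ^ ((d : ℝ) * q / 2) * |u (lam • x)| ^ q := by
    intro x
    rw [Tscal, abs_mul, Real.mul_rpow (abs_nonneg _) (abs_nonneg _),
      abs_of_pos (Real.rpow_pos_of_pos hlam _), ← Real.rpow_mul hlam.le]
    ring_nf
  simp only [lpInt, hpow]
  rw [integral_const_mul, integral_comp_smul_Ed hlam (fun x => |u x| ^ q), ← mul_assoc,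
    ← Real.rpow_add hlam]
  ring_nf

end Scaling

section Fibering

variable {d : ℕ} {ω μ p : ℝ} {u : Ed d → ℝ}

/-- For `l > 0` this is `K(T_l u) / l²`; unlike that quotient it extends continuously to
`l = 0`, where it equals `2 ‖∇u‖²`. -/
def Kfiber (d : ℕ) (μ p : ℝ) (u : Ed d → ℝ) (l : ℝ) : ℝ :=
  2 * gradsq d u - μ * ((d : ℝ) * (p - 1) / (p + 1)) * l ^ ((d : ℝ) * (p + 1) / 2 - d - 2)
      * lpInt d (p + 1) u
    - 2 * l ^ ((d : ℝ) * twoStar d / 2 - d - 2) * lpInt d (twoStar d) u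

theorem Kfiber_one : Kfiber d μ p u 1 = Kfun d μ p u := by
  simp [Kfiber, Kfun]

theorem Kfun_Tscal (hu : Differentiable ℝ u) {l : ℝ} (hl : 0 < l) :
    Kfun d μ p (Tscal d l u) = l ^ 2 * Kfiber d μ p u l := by
  rw [Kfun, Kfiber, gradsq_Tscal hu hl, lpInt_Tscal hl, lpInt_Tscal hl,
    rpow_eq_sq_mul_rpow_sub_two hl ((d : ℝ) * (p + 1) / 2 - d),
    rpow_eq_sq_mul_rpow_sub_two hl ((d : ℝ) * twoStar d / 2 - d)]
  ring

theorem Kfiber_zero (hd : 2 < d) (hp : 4 < (d : ℝ) * (p - 1)) :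
    Kfiber d μ p u 0 = 2 * gradsq d u := by
  have hstar := two_lt_twoStar hd
  rw [Kfiber, mul_twoStar_div_two_sub hd, Real.zero_rpow (by linarith),
    Real.zero_rpow (by linarith)]
  ring

theorem continuous_Kfiber (hd : 2 < d) (hp : 4 < (d : ℝ) * (p - 1)) :
    Continuous (Kfiber d μ p u) := by
  have hstar := two_lt_twoStar hd
  unfold Kfiber
  rw [mul_twoStar_div_two_sub hd]
  fun_prop (disch := linarith)

theorem antitoneOn_Kfiber (hμ : 0 ≤ μ) (hd : 2 < d) (hp : 4 < (d : ℝ) * (p - 1)) :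
    AntitoneOn (Kfiber d μ p u) (Ici 0) := by
  have hd' : (2 : ℝ) < d := by exact_mod_cast hd
  have hstar := two_lt_twoStar hd
  have hL := lpInt_nonneg d (p + 1) u
  have hLs := lpInt_nonneg d (twoStar d) u
  intro a ha b _ hab
  unfold Kfiber
  rw [mul_twoStar_div_two_sub hd]
  have hexp : 0 ≤ (d : ℝ) * (p + 1) / 2 - d - 2 := by linarith
  gcongr
  · exact mul_nonneg hμ (div_nonneg (by nlinarith) (by nlinarith))

theorem hasDerivAt_Sfun_Tscal (hu : Differentiable ℝ u) (hd : 2 < d) {l : ℝ} (hl : 0 < l) :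
    HasDerivAt (fun t => Sfun d ω μ p (Tscal d t u)) (l * Kfiber d μ p u l) l := by
  set a := (d : ℝ) * (p + 1) / 2 - d
  set b := (d : ℝ) * twoStar d / 2 - d
  have hS : ∀ t ∈ Ioi (0 : ℝ), Sfun d ω μ p (Tscal d t u)
      = ω * l2sq d u + t ^ 2 * gradsq d u
      - 2 * μ / (p + 1) * (t ^ a * lpInt d (p + 1) u)
      - ((d : ℝ) - 2) / d * (t ^ b * lpInt d (twoStar d) u) := by
    intro t ht
    rw [Sfun, l2sq_Tscal ht, gradsq_Tscal hu ht, lpInt_Tscal ht, lpInt_Tscal ht]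
  have hF := ((((hasDerivAt_pow 2 l).mul_const (gradsq d u)).const_add (ω * l2sq d u)).sub
    (((Real.hasDerivAt_rpow_const (p := a) (Or.inl hl.ne')).mul_const
      (lpInt d (p + 1) u)).const_mul (2 * μ / (p + 1)))).sub
    (((Real.hasDerivAt_rpow_const (p := b) (Or.inl hl.ne')).mul_const
      (lpInt d (twoStar d) u)).const_mul (((d : ℝ) - 2) / d))
  refine (hF.congr_of_eventuallyEq (eventually_of_mem (Ioi_mem_nhds hl) hS)).congr_deriv ?_
  have hb : ((d : ℝ) - 2) / d * b = 2 := by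
    have hd' : (2 : ℝ) < d := by exact_mod_cast hd
    have : (d : ℝ) - 2 ≠ 0 := by linarith
    simp only [b]
    rw [mul_twoStar_div_two_sub hd, twoStar]
    field_simp
  rw [Kfiber, show a - 1 = a - 2 + 1 by ring, show b - 1 = b - 2 + 1 by ring,
    Real.rpow_add_one hl.ne', Real.rpow_add_one hl.ne']
  linear_combination (-(l * l ^ (b - 2) * lpInt d (twoStar d) u)) * hb

end Fibering

theorem Sfun_sub_half_Kfun {d : ℕ} (hd : d ≠ 0) (ω μ p : ℝ) (u : Ed d → ℝ) :
    Sfun d ω μ p u - Kfun d μ p u / 2 = ω * l2sq d u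
      + μ * ((d : ℝ) * (p - 1) - 4) / (2 * (p + 1)) * lpInt d (p + 1) u
      + 2 / d * lpInt d (twoStar d) u := by
  have : (d : ℝ) ≠ 0 := by exact_mod_cast hd
  rw [Sfun, Kfun]
  field_simp
  ring

theorem mOmega_le_Sfun {d : ℕ} {ω μ p : ℝ} (hd : d ≠ 0) (hω : 0 ≤ ω) (hμ : 0 ≤ μ)
    (hp : 4 ≤ (d : ℝ) * (p - 1)) {u : Ed d → ℝ} (hu : adm d p u) (hK : Kfun d μ p u = 0) :
    mOmega d ω μ p ≤ Sfun d ω μ p u := by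
  have hd' : (0 : ℝ) < d := by exact_mod_cast Nat.pos_of_ne_zero hd
  have hNehari_nonneg : ∀ v : Ed d → ℝ, Kfun d μ p v = 0 → 0 ≤ Sfun d ω μ p v := by
    intro v hv
    have hid := Sfun_sub_half_Kfun hd ω μ p v
    rw [hv, zero_div, sub_zero] at hid
    rw [hid]
    have := l2sq_nonneg d v
    have := lpInt_nonneg d (p + 1) v
    have := lpInt_nonneg d (twoStar d) v
    have : 0 ≤ μ * ((d : ℝ) * (p - 1) - 4) / (2 * (p + 1)) :=
      div_nonneg (mul_nonneg hμ (by linarith)) (by nlinarith)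
    positivity
  exact csInf_le ⟨0, fun y ⟨v, _, hv, hy⟩ => hy ▸ hNehari_nonneg v hv⟩
    ⟨u, hu, hK, rfl⟩

section Admissible

variable {d : ℕ} {p : ℝ} {u : Ed d → ℝ}

theorem fderiv_ae_eq_zero_of_gradsq_eq_zero
    (hgrad : MemLp (fun x => ‖fderiv ℝ u x‖) 2 (volume : Measure (Ed d)))
    (h : gradsq d u = 0) : ∀ᵐ x : Ed d, fderiv ℝ u x = 0 := by
  have hint : Integrable (fun x : Ed d => ‖fderiv ℝ u x‖ ^ 2) := by
    simpa using hgrad.integrable_norm_pow two_ne_zero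
  have hsq := (integral_eq_zero_iff_of_nonneg (fun x => sq_nonneg _) hint).1 h
  filter_upwards [hsq] with x hx
  simpa using hx

theorem gradsq_pos (hd : d ≠ 0) (hu : H1 d u)
    (hne : ¬ (u =ᵐ[(volume : Measure (Ed d))] 0)) : 0 < gradsq d u := by
  obtain ⟨hL2, hdiff, hgrad⟩ := hu
  refine (gradsq_nonneg d u).lt_of_ne fun h => hne ?_
  have hconst : ∀ x, u x = u 0 := fun x =>
    eq_of_fderiv_ae_eq_zero hdiff (fderiv_ae_eq_zero_of_gradsq_eq_zero hgrad h.symm) x 0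
  have : NeZero d := ⟨hd⟩
  have hmem : MemLp (fun _ : Ed d => u 0) 2 (volume : Measure (Ed d)) :=
    hL2.ae_eq (ae_of_all _ hconst)
  rw [memLp_const_iff two_ne_zero ENNReal.ofNat_ne_top, measure_univ_of_isAddLeftInvariant] at hmem
  refine ae_of_all _ fun x => ?_
  simpa [hconst x] using hmem

theorem Tscal_ae_eq_zero_iff {lam : ℝ} (hlam : 0 < lam) :
    Tscal d lam u =ᵐ[(volume : Measure (Ed d))] 0 ↔ u =ᵐ[(volume : Measure (Ed d))] 0 := by
  have hc : lam ^ ((d : ℝ) / 2) ≠ 0 := (Real.rpow_pos_of_pos hlam _).ne'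
  have hcomp : Tscal d lam u =ᵐ[volume] 0 ↔ ∀ᵐ x : Ed d, u (lam • x) = 0 := by
    simp [Filter.EventuallyEq, Tscal, hc]
  rw [hcomp]
  constructor
  · intro h
    filter_upwards [(Measure.quasiMeasurePreserving_smul volume (inv_ne_zero hlam.ne')).ae h]
      with x hx
    simpa [smul_smul, hlam.ne'] using hx
  · exact fun h => (Measure.quasiMeasurePreserving_smul volume hlam.ne').ae h

theorem adm_Tscal (hu : adm d p u) {lam : ℝ} (hlam : 0 < lam) : adm d p (Tscal d lam u) := by
  obtain ⟨⟨hL2, hdiff, hgrad⟩, hne, hLp, hLs⟩ := hu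
  have hTmem : ∀ {q : ENNReal}, MemLp u q volume → MemLp (Tscal d lam u) q volume :=
    fun hq => (hq.comp_smul hlam.ne').const_mul _
  refine ⟨⟨hTmem hL2, fun x => (hasFDerivAt_Tscal hdiff lam x).differentiableAt, ?_⟩,
    (Tscal_ae_eq_zero_iff hlam).not.2 hne, hTmem hLp, hTmem hLs⟩
  simpa only [norm_fderiv_Tscal hdiff hlam] using (hgrad.comp_smul hlam.ne').const_mul _

end Admissible

theorem stmt17_general (d : ℕ) (hd : 3 ≤ d) (ω μ p : ℝ) (hω : 0 < ω) (hμ : 0 < μ)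
    (hp1 : 1 + 4 / (d : ℝ) < p)
    (Q : Ed d → ℝ) (hadm : adm d p Q)
    (hK : Kfun d μ p Q < 0) :
    mOmega d ω μ p + Kfun d μ p Q < Sfun d ω μ p Q := by
  have hd2 : 2 < d := hd
  have hp : 4 < (d : ℝ) * (p - 1) := by
    have hd' : (0 : ℝ) < d := by positivity
    exact (div_lt_iff₀' hd').1 (by linarith)
  have hdiff : Differentiable ℝ Q := hadm.1.2.1
  obtain ⟨l₀, ⟨hl₀, hl₀1⟩, hroot⟩ :
      ∃ l₀ ∈ Ioo (0 : ℝ) 1, Kfiber d μ p Q l₀ = 0 := by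
    refine intermediate_value_Ioo' zero_le_one (continuous_Kfiber hd2 hp).continuousOn ⟨?_, ?_⟩
    · rwa [Kfiber_one]
    · rw [Kfiber_zero hd2 hp]
      linarith [gradsq_pos (by omega) hadm.1 hadm.2.1]
  have hNehari : mOmega d ω μ p ≤ Sfun d ω μ p (Tscal d l₀ Q) :=
    mOmega_le_Sfun (by omega) hω.le hμ.le hp.le (adm_Tscal hadm hl₀)
      (by rw [Kfun_Tscal hdiff hl₀, hroot, mul_zero])
  have htangent := add_one_sub_mul_le_of_hasDerivAt (f := fun t => Sfun d ω μ p (Tscal d t Q))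
    hl₀1.le (fun l hl => hasDerivAt_Sfun_Tscal hdiff hd2 (hl₀.trans_le hl.1))
    ((antitoneOn_Kfiber hμ.le hd2 hp).mono fun l hl => hl₀.le.trans hl.1) hroot.le
  rw [Tscal_one, Kfiber_one] at htangent
  linarith [mul_pos hl₀ (neg_pos.2 hK)]

/-- uniform negativity of K below the ground state level:
S_ω(Q) > m_ω + K(Q). -/
theorem stmt17 (d : ℕ) (hd : 3 ≤ d) (ω μ p : ℝ) (hω : 0 < ω) (hμ : 0 < μ)
    (hp1 : 1 + 4 / (d : ℝ) < p) (hp2 : p < twoStar d - 1)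
    (Q : Ed d → ℝ) (hadm : adm d p Q)
    (hK : Kfun d μ p Q < 0) (hS : Sfun d ω μ p Q < mOmega d ω μ p) :
    mOmega d ω μ p + Kfun d μ p Q < Sfun d ω μ p Q :=
  stmt17_general d hd ω μ p hω hμ hp1 Q hadm hK
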